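/- arXiv:2112.09746 — 2 statements merged into one kernel-verified Lean document; each statement's English description precedes it below -/
import Mathlib

section
/- Logarithmic growth of Stirling numbers of the second kind. There exist positive constants c₁ and c₂ such that for every integer p ≥ 1 and every integer q with 1 ≤ q ≤ p, c₁ (p − q) log q ≤ log S(p,q) ≤ c₂ (p − q) log q, where S(p,q) is the Stirling number of the second kind. -/
noncomputable section

/-- Stirling numbers of the second kind: the number of ways to partition a set of `p`
labeled objects into `q` nonempty unlabeled subsets. -/
def stirling2 : ℕ → ℕ → ℕ
  | 0, 0 => 1
  | 0, _ + 1 => 0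
  | _ + 1, 0 => 0
  | p + 1, q + 1 => (q + 1) * stirling2 p (q + 1) + stirling2 p q

/-!
Write `p = q + d`. In the recurrence `S(n+1, q) = q S(n, q) + S(n, q-1)` the first term
raises `d` by one at the cost of a factor `q`, which gives `q ^ d ≤ S(q + d, q)`. Conversely, by
induction on `q` and then on `d`, `S(q + d, q) ≤ q ^ (2 d)`, since
`q^(2d+2) ≤ q (q+1)^(2d+1)`. Taking logarithms gives the theorem with `c₁ = 1`, `c₂ = 2`.
-/

theorem stirling2_eq_stirlingSecond : stirling2 = Nat.stirlingSecond := by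
  funext p q
  induction p generalizing q with
  | zero => cases q <;> rfl
  | succ p ih =>
    cases q with
    | zero => rfl
    | succ q => simp only [stirling2, Nat.stirlingSecond_succ_succ, ih]

namespace Nat

theorem pow_le_stirlingSecond_add (q d : ℕ) : q ^ d ≤ stirlingSecond (q + d) q := by
  induction d with
  | zero => simp [stirlingSecond_self]
  | succ d ih =>
    cases q with
    | zero => simp
    | succ q =>
      rw [← add_assoc, stirlingSecond_succ_succ, pow_succ']
      exact (Nat.mul_le_mul_left _ ih).trans (le_add_right _ _)

theorem stirlingSecond_add_le (q d : ℕ) : stirlingSecond (q + d) q ≤ q ^ (2 * d) := by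
  induction q generalizing d with
  | zero => cases d <;> simp
  | succ q ihq =>
    induction d with
    | zero => simp [stirlingSecond_self]
    | succ d ihd =>
      have hq : q ^ (2 * (d + 1)) ≤ q * (q + 1) ^ (2 * d + 1) := by
        rw [show 2 * (d + 1) = (2 * d + 1) + 1 by ring, pow_succ']
        exact Nat.mul_le_mul_left _ (Nat.pow_le_pow_left (le_succ q) _)
      calc stirlingSecond (q + 1 + (d + 1)) (q + 1)
          = (q + 1) * stirlingSecond (q + 1 + d) (q + 1) + stirlingSecond (q + (d + 1)) q := by
            rw [← add_assoc, stirlingSecond_succ_succ, add_right_comm q 1 d, add_assoc q d 1]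
        _ ≤ (q + 1) * (q + 1) ^ (2 * d) + q ^ (2 * (d + 1)) :=
            Nat.add_le_add (Nat.mul_le_mul_left _ ihd) (ihq (d + 1))
        _ ≤ (q + 1) ^ (2 * d + 1) + q * (q + 1) ^ (2 * d + 1) := by
            rw [← pow_succ']
            exact Nat.add_le_add_left hq _
        _ = (q + 1) ^ (2 * (d + 1)) := by ring

end Nat

/-- **Logarithmic growth of Stirling numbers of the second kind.** There are positive
constants `c₁, c₂` such that for all `1 ≤ q ≤ p`,
`c₁ (p - q) log q ≤ log S(p,q) ≤ c₂ (p - q) log q`. -/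
theorem stirling2_log_bounds :
    ∃ c₁ c₂ : ℝ, 0 < c₁ ∧ 0 < c₂ ∧
      ∀ p q : ℕ, 1 ≤ p → 1 ≤ q → q ≤ p →
        c₁ * ((p - q : ℕ) : ℝ) * Real.log q ≤ Real.log (stirling2 p q) ∧
        Real.log (stirling2 p q) ≤ c₂ * ((p - q : ℕ) : ℝ) * Real.log q := by
  refine ⟨1, 2, one_pos, two_pos, fun p q _ hq hqp => ?_⟩
  obtain ⟨d, rfl⟩ := Nat.exists_eq_add_of_le hqp
  rw [stirling2_eq_stirlingSecond, Nat.add_sub_cancel_left]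
  have hlow : ((q ^ d : ℕ) : ℝ) ≤ Nat.stirlingSecond (q + d) q :=
    mod_cast Nat.pow_le_stirlingSecond_add q d
  have hup : (Nat.stirlingSecond (q + d) q : ℝ) ≤ ((q ^ (2 * d) : ℕ) : ℝ) :=
    mod_cast Nat.stirlingSecond_add_le q d
  have hpow : (0 : ℝ) < ((q ^ d : ℕ) : ℝ) := by positivity
  constructor
  · calc 1 * (d : ℝ) * Real.log q = Real.log ((q ^ d : ℕ) : ℝ) := by
          push_cast; rw [Real.log_pow]; ring
      _ ≤ _ := Real.log_le_log hpow hlow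
  · calc Real.log (Nat.stirlingSecond (q + d) q) ≤ Real.log ((q ^ (2 * d) : ℕ) : ℝ) :=
          Real.log_le_log (hpow.trans_le hlow) hup
      _ = 2 * (d : ℝ) * Real.log q := by push_cast; rw [Real.log_pow]; push_cast; ring
end
end

section
/- Equivalence of the projected (canonical-correlation-type) form of CRL and weighted reduced-rank regression. Let X ∈ ℝ^{n×p}, Y ∈ ℝ^{n×m}, 1 ≤ r ≤ rank(Y), and 1 ≤ q ≤ p. Let Σ_Y = YᵀY/n and let G be the Moore–Penrose inverse of Σ_Y, i.e., the unique matrix satisfying Σ_Y G Σ_Y = Σ_Y, G Σ_Y G = G, (Σ_Y G)ᵀ = Σ_Y G, and (G Σ_Y)ᵀ = G Σ_Y. Then inf over (S,A) ∈ ℝ^{p×r} × ℝ^{m×r} subject to (YA)ᵀ(YA) = nI and ‖S‖_{2,C} ≤ q of ½‖YA − XS‖_F² equals [ inf over B ∈ ℝ^{p×m} subject to rank(B) ≤ r and ‖B‖_{2,C} ≤ q of ½ Tr{ (Y − XB) G (Y − XB)ᵀ } ] + (n/2)(r − rank(Y)). The same conclusion holds when the constraint ‖·‖_{2,C} ≤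 q is replaced throughout by the constraint that the number of nonzero rows is at most q. -/
open Matrix

noncomputable section

/-- The space of real `k × l` matrices. -/
abbrev Mat (k l : ℕ) := Matrix (Fin k) (Fin l) ℝ

/-- Frobenius (trace) inner product. -/
def mip {k l : ℕ} (A B : Mat k l) : ℝ := ∑ i, ∑ j, A i j * B i j

/-- Squared Frobenius norm. -/
def frobSq {k l : ℕ} (A : Mat k l) : ℝ := mip A A

/-- Number of distinct rows of a matrix, `‖B‖_{2,C}`. -/
def distinctRows {k l : ℕ} (A : Mat k l) : ℕ := (Set.range fun i => A i).ncard

/-- Number of nonzero rows of a matrix. -/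
def nonzeroRows {k l : ℕ} (A : Mat k l) : ℕ := {i : Fin k | A i ≠ 0}.ncard

/-! With `Σ = YᵀY / n` and `k = rank Y`, the Penrose equations make `G` symmetric and give a
factorisation `G = W Wᵀ` with `(Y W)ᵀ (Y W) = n I_k`: take `W = G Yᵀ Z / √n` for an orthonormal
basis `Z` of the column space of `Y`. For `B` of rank at most `r`, rotating `W` by an orthogonal
matrix whose last `k - r` columns lie in the kernel of `B W` splits `G = A Aᵀ + V Vᵀ` with
`B V = 0`; the weighted residual of `B` is then `‖Y A - X B A‖²_F + n (k - r)`. Conversely a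
feasible pair `(S, A)` yields `B = S Aᵀ Σ` with weighted residual `‖Y A - X S‖²_F + n (k - r)`.
Right multiplication does not increase the number of distinct or nonzero rows, so the two sets of
objective values are translates of each other by `n (r - k) / 2`. -/

open scoped InnerProductSpace

structure IsPenroseInverse {l m R : Type*} [Fintype l] [Fintype m] [CommSemiring R]
    (A : Matrix l m R) (G : Matrix m l R) : Prop where
  mul_inv_mul : A * G * A = A
  inv_mul_inv : G * A * G = G
  transpose_mul_inv : (A * G)ᵀ = A * G
  transpose_inv_mul : (G * A)ᵀ = G * A

namespace IsPenroseInverse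

variable {l m R : Type*} [Fintype l] [Fintype m] [CommSemiring R] {A : Matrix l m R}
  {G H : Matrix m l R}

theorem transpose (hG : IsPenroseInverse A G) : IsPenroseInverse Aᵀ Gᵀ where
  mul_inv_mul := by
    simpa only [Matrix.transpose_mul, Matrix.mul_assoc] using
      congrArg Matrix.transpose hG.mul_inv_mul
  inv_mul_inv := by
    simpa only [Matrix.transpose_mul, Matrix.mul_assoc] using
      congrArg Matrix.transpose hG.inv_mul_inv
  transpose_mul_inv := by
    rw [← Matrix.transpose_mul, Matrix.transpose_transpose, hG.transpose_inv_mul]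
  transpose_inv_mul := by
    rw [← Matrix.transpose_mul, Matrix.transpose_transpose, hG.transpose_mul_inv]

theorem unique (hG : IsPenroseInverse A G) (hH : IsPenroseInverse A H) : G = H := by
  have hAG : A * G = A * G * (A * H) := calc
    A * G = (A * H * (A * G))ᵀ := by rw [← Matrix.mul_assoc, hH.mul_inv_mul, hG.transpose_mul_inv]
    _ = A * G * (A * H) := by rw [Matrix.transpose_mul, hG.transpose_mul_inv, hH.transpose_mul_inv]
  have hHA : H * A = G * A * (H * A) := calc
    H * A = (H * A * (G * A))ᵀ := by
      rw [Matrix.mul_assoc, ← Matrix.mul_assoc A, hG.mul_inv_mul, hH.transpose_inv_mul]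
    _ = G * A * (H * A) := by rw [Matrix.transpose_mul, hG.transpose_inv_mul, hH.transpose_inv_mul]
  calc G = G * A * G := hG.inv_mul_inv.symm
    _ = G * A * H := by
      rw [Matrix.mul_assoc, hAG, ← Matrix.mul_assoc, ← Matrix.mul_assoc G A G, hG.inv_mul_inv,
        Matrix.mul_assoc]
    _ = G * A * (H * A * H) := by rw [hH.inv_mul_inv]
    _ = H := by rw [← Matrix.mul_assoc (G * A) (H * A) H, ← hHA, hH.inv_mul_inv]

theorem transpose_eq_self {A G : Matrix m m R} (hG : IsPenroseInverse A G) (hA : Aᵀ = A) :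
    Gᵀ = G := by
  have := hG.transpose
  rw [hA] at this
  exact this.unique hG

end IsPenroseInverse

theorem finrank_range_toEuclideanLin {ι κ : Type*} [Fintype ι] [Fintype κ] [DecidableEq κ]
    (C : Matrix ι κ ℝ) : Module.finrank ℝ (LinearMap.range (Matrix.toEuclideanLin C)) = C.rank := by
  rw [Matrix.rank_eq_finrank_range_toLin C (EuclideanSpace.basisFun ι ℝ).toBasis
    (EuclideanSpace.basisFun κ ℝ).toBasis, ← Matrix.toEuclideanLin_eq_toLin_orthonormal]

theorem exists_orthonormal_cols_spanning_range {ι κ : Type*} [Fintype ι] [Fintype κ]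
    [DecidableEq κ] (Y : Matrix ι κ ℝ) :
    ∃ Z : Matrix ι (Fin Y.rank) ℝ,
      Zᵀ * Z = 1 ∧ Z * Zᵀ * Y = Y ∧ ∃ N : Matrix κ (Fin Y.rank) ℝ, Y * N = Z := by
  set K := LinearMap.range (Matrix.toEuclideanLin Y)
  let b := (stdOrthonormalBasis ℝ K).reindex (finCongr (finrank_range_toEuclideanLin Y))
  have hinner (x : EuclideanSpace ℝ ι) (j : Fin Y.rank) :
      ⟪(b j : EuclideanSpace ℝ ι), x⟫_ℝ = ∑ a, (b j : EuclideanSpace ℝ ι) a * x a := by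
    simp [EuclideanSpace.inner_eq_star_dotProduct, dotProduct, mul_comm]
  refine ⟨Matrix.of fun a j => (b j : EuclideanSpace ℝ ι) a, ?_, ?_, ?_⟩
  · ext i j
    have := orthonormal_iff_ite.mp b.orthonormal i j
    rw [Submodule.coe_inner, hinner] at this
    simpa [Matrix.mul_apply, Matrix.one_apply] using this
  · ext a c
    have hy : (WithLp.toLp 2 fun a => Y a c) ∈ K :=
      ⟨EuclideanSpace.single c 1, by ext; simp [Matrix.toLpLin_apply]⟩
    have := congrArg (fun x : K => (x : EuclideanSpace ℝ ι) a) (b.sum_repr' ⟨_, hy⟩)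
    simp only [Submodule.coe_inner, hinner] at this
    rw [← this]
    simp only [Matrix.mul_apply, Matrix.of_apply, Matrix.transpose_apply, Submodule.coe_sum,
      Submodule.coe_smul, WithLp.ofLp_sum, WithLp.ofLp_smul, Finset.sum_apply, Pi.smul_apply,
      smul_eq_mul, Finset.sum_mul]
    rw [Finset.sum_comm]
    exact Finset.sum_congr rfl fun _ _ => Finset.sum_congr rfl fun _ _ => by ring
  · choose x hx using fun j => (b j).2
    refine ⟨Matrix.of fun c j => x j c, ?_⟩
    ext a j
    rw [Matrix.of_apply, ← hx j]
    simp [Matrix.mul_apply, Matrix.toLpLin_apply, Matrix.mulVec, dotProduct]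

theorem exists_orthogonal_split_mul_eq_zero {ι κ : Type*} [Fintype ι] [Fintype κ]
    [DecidableEq κ] (C : Matrix ι κ ℝ) {r s : ℕ} (hC : C.rank ≤ r)
    (hrs : r + s = Fintype.card κ) :
    ∃ (Q₁ : Matrix κ (Fin r) ℝ) (Q₂ : Matrix κ (Fin s) ℝ), Q₁ᵀ * Q₁ = 1 ∧ Q₂ᵀ * Q₂ = 1 ∧
      Q₁ * Q₁ᵀ + Q₂ * Q₂ᵀ = 1 ∧ C * Q₂ = 0 := by
  have hs : s ≤ Module.finrank ℝ (LinearMap.ker (Matrix.toEuclideanLin C)) := by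
    have := LinearMap.finrank_range_add_finrank_ker (Matrix.toEuclideanLin C)
    rw [finrank_range_toEuclideanLin, finrank_euclideanSpace] at this
    omega
  set K := LinearMap.ker (Matrix.toEuclideanLin C)
  let c (j : Fin s) : EuclideanSpace ℝ κ := stdOrthonormalBasis ℝ K (Fin.castLE hs j)
  have hc : Orthonormal ℝ c :=
    ((stdOrthonormalBasis ℝ K).orthonormal.comp _ (Fin.castLE_injective hs)).comp_linearIsometry
      K.subtypeₗᵢ
  obtain ⟨b, hb⟩ := Orthonormal.exists_orthonormalBasis_extension_of_card_eq (𝕜 := ℝ)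
    (v := Sum.elim (fun _ : Fin r => 0) c) (s := Set.range Sum.inr)
    (by simp [hrs]) (by
      rw [orthonormal_iff_ite]
      rintro ⟨_, i, rfl⟩ ⟨_, j, rfl⟩
      simpa [Subtype.ext_iff] using orthonormal_iff_ite.mp hc i j)
  let Q := (EuclideanSpace.basisFun κ ℝ).toBasis.toMatrix b
  have hQQ : Qᵀ * Q = 1 := by
    rw [← Matrix.conjTranspose_eq_transpose_of_trivial]
    exact OrthonormalBasis.toMatrix_orthonormalBasis_conjTranspose_mul_self _ _
  have hQQ' : Q * Qᵀ = 1 := by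
    rw [← Matrix.conjTranspose_eq_transpose_of_trivial]
    exact OrthonormalBasis.toMatrix_orthonormalBasis_self_mul_conjTranspose _ _
  rw [← Matrix.fromCols_toCols Q, Matrix.transpose_fromCols, Matrix.fromRows_mul_fromCols,
    ← Matrix.fromBlocks_one, Matrix.fromBlocks_inj] at hQQ
  rw [← Matrix.fromCols_toCols Q, Matrix.transpose_fromCols, Matrix.fromCols_mul_fromRows] at hQQ'
  refine ⟨Q.toCols₁, Q.toCols₂, hQQ.1, hQQ.2.2.2, hQQ', ?_⟩
  ext a j
  have hcol (i : κ) : Q.toCols₂ i j = c j i := by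
    simp [Q, Module.Basis.toMatrix_apply, hb (Sum.inr j) ⟨j, rfl⟩]
  have hker : C *ᵥ (c j).ofLp = 0 :=
    congrArg WithLp.ofLp (LinearMap.mem_ker.mp (stdOrthonormalBasis ℝ K (Fin.castLE hs j)).2)
  calc (C * Q.toCols₂) a j = (C *ᵥ (c j).ofLp) a := by
        simp only [Matrix.mul_apply, Matrix.mulVec, dotProduct, hcol]
    _ = 0 := by rw [hker]; rfl

section Whitening

variable {ι κ : Type*} [Fintype ι] [Fintype κ] {Y : Matrix ι κ ℝ} {Sg G : Matrix κ κ ℝ} {t : ℝ}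

theorem mul_mul_eq_self_of_gram (hSg : Yᵀ * Y = t • Sg) (hG : Sg * G * Sg = Sg) :
    Y * G * Sg = Y := by
  set N := Y * (G * Sg) - Y
  have hYN : Yᵀ * N = 0 := by
    rw [Matrix.mul_sub, ← Matrix.mul_assoc, hSg, Matrix.smul_mul, ← Matrix.mul_assoc, hG, sub_self]
  have hNN : Nᴴ * N = 0 := by
    rw [Matrix.conjTranspose_eq_transpose_of_trivial, Matrix.transpose_sub, Matrix.sub_mul,
      Matrix.transpose_mul, Matrix.mul_assoc, hYN, Matrix.mul_zero, sub_zero]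
  rw [Matrix.mul_assoc]
  exact sub_eq_zero.mp (Matrix.conjTranspose_mul_self_eq_zero.mp hNN)

theorem transpose_eq_self_of_gram (ht : t ≠ 0) (hSg : Yᵀ * Y = t • Sg) : Sgᵀ = Sg := by
  have := congrArg Matrix.transpose hSg
  rw [Matrix.transpose_mul, Matrix.transpose_transpose, hSg, Matrix.transpose_smul] at this
  exact smul_right_injective _ ht this.symm

variable [DecidableEq κ]

theorem exists_whitening_frame (ht : 0 < t) (hSg : Yᵀ * Y = t • Sg)
    (hG : IsPenroseInverse Sg G) :
    ∃ W : Matrix κ (Fin Y.rank) ℝ, W * Wᵀ = G ∧ (Y * W)ᵀ * (Y * W) = t • 1 := by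
  obtain ⟨Z, hZZ, hZY, N, hN⟩ := exists_orthonormal_cols_spanning_range Y
  have hGt : Gᵀ = G := hG.transpose_eq_self (transpose_eq_self_of_gram ht.ne' hSg)
  have hsqrt : Real.sqrt t * Real.sqrt t = t := Real.mul_self_sqrt ht.le
  refine ⟨(Real.sqrt t)⁻¹ • (G * Yᵀ * Z), ?_, ?_⟩
  · calc _ = (Real.sqrt t * Real.sqrt t)⁻¹ • (G * (Yᵀ * (Z * Zᵀ * Y)) * Gᵀ) := by
          simp only [Matrix.transpose_smul, Matrix.smul_mul, Matrix.mul_smul, smul_smul,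
            mul_inv, Matrix.transpose_mul, Matrix.transpose_transpose, Matrix.mul_assoc]
      _ = G * Sg * G := by
          rw [hZY, hsqrt, hSg, hGt, Matrix.mul_smul, Matrix.smul_mul, smul_smul,
            inv_mul_cancel₀ ht.ne', one_smul]
      _ = G := hG.inv_mul_inv
  · have hW : Y * ((Real.sqrt t)⁻¹ • (G * Yᵀ * Z)) = Real.sqrt t • Z := calc
      _ = (Real.sqrt t)⁻¹ • (Y * G * (Yᵀ * Y) * N) := by
        simp only [← hN, Matrix.mul_smul, Matrix.mul_assoc]
      _ = ((Real.sqrt t)⁻¹ * (Real.sqrt t * Real.sqrt t)) • (Y * G * Sg * N) := by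
        rw [hSg, hsqrt, Matrix.mul_smul, Matrix.smul_mul, smul_smul]
      _ = Real.sqrt t • Z := by
        rw [mul_mul_eq_self_of_gram hSg hG.mul_inv_mul, hN,
          inv_mul_cancel_left₀ (Real.sqrt_pos.mpr ht).ne']
    rw [hW, Matrix.transpose_smul, Matrix.smul_mul, Matrix.mul_smul, hZZ, smul_smul, hsqrt]

theorem exists_adapted_frames (ht : 0 < t) (hSg : Yᵀ * Y = t • Sg) (hG : IsPenroseInverse Sg G)
    {p : Type*} [Fintype p] (B : Matrix p κ ℝ) {r : ℕ} (hB : B.rank ≤ r) (hr : r ≤ Y.rank) :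
    ∃ (A : Matrix κ (Fin r) ℝ) (V : Matrix κ (Fin (Y.rank - r)) ℝ),
      (Y * A)ᵀ * (Y * A) = t • 1 ∧ (Y * V)ᵀ * (Y * V) = t • 1 ∧ A * Aᵀ + V * Vᵀ = G ∧
      B * V = 0 := by
  obtain ⟨W, hWW, hYW⟩ := exists_whitening_frame ht hSg hG
  obtain ⟨Q₁, Q₂, hQ₁, hQ₂, hQQ, hBQ⟩ := exists_orthogonal_split_mul_eq_zero (B * W)
    ((Matrix.rank_mul_le_left B W).trans hB) (s := Y.rank - r) (by simp; omega)
  have hgram {l : ℕ} (Q : Matrix (Fin Y.rank) (Fin l) ℝ) (hQ : Qᵀ * Q = 1) :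
      (Y * (W * Q))ᵀ * (Y * (W * Q)) = t • 1 := calc
    _ = Qᵀ * ((Y * W)ᵀ * (Y * W)) * Q := by simp only [Matrix.transpose_mul, Matrix.mul_assoc]
    _ = t • 1 := by rw [hYW, Matrix.mul_smul, Matrix.mul_one, Matrix.smul_mul, hQ]
  refine ⟨W * Q₁, W * Q₂, hgram Q₁ hQ₁, hgram Q₂ hQ₂, ?_, ?_⟩
  · simp only [Matrix.transpose_mul, Matrix.mul_assoc, ← Matrix.mul_add]
    rw [← Matrix.mul_assoc Q₁, ← Matrix.mul_assoc Q₂, ← Matrix.add_mul, hQQ, Matrix.one_mul, hWW]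
  · rw [← Matrix.mul_assoc, hBQ]

end Whitening

theorem frobSq_eq_trace {k l : ℕ} (M : Mat k l) : frobSq M = (M * Mᵀ).trace := by
  simp [frobSq, mip, Matrix.trace, Matrix.mul_apply]

theorem frobSq_nonneg {k l : ℕ} (M : Mat k l) : 0 ≤ frobSq M := by
  unfold frobSq mip
  exact Finset.sum_nonneg fun _ _ => Finset.sum_nonneg fun _ _ => mul_self_nonneg _

theorem frobSq_eq_of_transpose_mul_self {k l : ℕ} {M : Mat k l} {c : ℝ} (hM : Mᵀ * M = c • 1) :
    frobSq M = c * l := by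
  rw [frobSq_eq_trace, Matrix.trace_mul_comm, hM, Matrix.trace_smul, Matrix.trace_one,
    Fintype.card_fin, smul_eq_mul]

theorem trace_mul_mul_transpose_eq_frobSq_add {k m r s : ℕ} (M : Mat k m) {G : Mat m m}
    {A : Mat m r} {V : Mat m s} (hG : A * Aᵀ + V * Vᵀ = G) :
    (M * G * Mᵀ).trace = frobSq (M * A) + frobSq (M * V) := by
  simp only [← hG, frobSq_eq_trace, Matrix.mul_add, Matrix.add_mul, Matrix.trace_add,
    Matrix.transpose_mul, Matrix.mul_assoc]

theorem trace_sub_mul_mul_transpose_sub {k m : ℕ} (Y C : Mat k m) {G : Mat m m} (hG : Gᵀ = G) :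
    ((Y - C) * G * (Y - C)ᵀ).trace
      = (Y * G * Yᵀ).trace - 2 * (C * G * Yᵀ).trace + (C * G * Cᵀ).trace := by
  have hcross : (Y * G * Cᵀ).trace = (C * G * Yᵀ).trace := by
    rw [← Matrix.trace_transpose, Matrix.transpose_mul, Matrix.transpose_mul, hG,
      Matrix.transpose_transpose, Matrix.mul_assoc]
  simp only [Matrix.transpose_sub, Matrix.sub_mul, Matrix.mul_sub, Matrix.trace_sub, hcross]
  ring

theorem frobSq_sub {k m : ℕ} (Y C : Mat k m) :
    frobSq (Y - C) = frobSq Y - 2 * (C * Yᵀ).trace + frobSq C := by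
  simpa [frobSq_eq_trace] using trace_sub_mul_mul_transpose_sub Y C (G := 1) Matrix.transpose_one

section WeightedResidual

variable {n m : ℕ} {Y : Mat n m} {Sg G : Mat m m}

theorem trace_mul_penroseInverse_mul_transpose (hn : 0 < n) (hSg : Yᵀ * Y = (n : ℝ) • Sg)
    (hG : IsPenroseInverse Sg G) : (Y * G * Yᵀ).trace = n * Y.rank := by
  obtain ⟨W, hWW, hYW⟩ := exists_whitening_frame (by exact_mod_cast hn) hSg hG
  rw [← frobSq_eq_of_transpose_mul_self hYW, frobSq_eq_trace, ← hWW]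
  simp only [Matrix.transpose_mul, Matrix.mul_assoc]

theorem trace_weighted_residual_of_crl (hn : 0 < n) (hSg : Yᵀ * Y = (n : ℝ) • Sg)
    (hG : IsPenroseInverse Sg G) {p r : ℕ} (X : Mat n p) (S : Mat p r) {A : Mat m r}
    (hA : (Y * A)ᵀ * (Y * A) = (n : ℝ) • 1) :
    ((Y - X * (S * (Aᵀ * Sg))) * G * (Y - X * (S * (Aᵀ * Sg)))ᵀ).trace
      = frobSq (Y * A - X * S) + n * (Y.rank - r) := by
  have hn' : (n : ℝ) ≠ 0 := by exact_mod_cast hn.ne'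
  have hSgt := transpose_eq_self_of_gram hn' hSg
  have hGt := hG.transpose_eq_self hSgt
  have hASA : Aᵀ * Sg * A = 1 := by
    refine smul_right_injective _ hn' (?_ : (n : ℝ) • (Aᵀ * Sg * A) = (n : ℝ) • 1)
    rw [← hA, ← Matrix.smul_mul, ← Matrix.mul_smul, ← hSg]
    simp only [Matrix.transpose_mul, Matrix.mul_assoc]
  have hSGY : Sg * G * Yᵀ = Yᵀ := by
    simpa only [Matrix.transpose_mul, hSgt, hGt, Matrix.mul_assoc] using
      congrArg Matrix.transpose (mul_mul_eq_self_of_gram hSg hG.mul_inv_mul)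
  have hcross : X * (S * (Aᵀ * Sg)) * G * Yᵀ = X * S * (Y * A)ᵀ := calc
    _ = X * S * Aᵀ * (Sg * G * Yᵀ) := by simp only [Matrix.mul_assoc]
    _ = _ := by rw [hSGY, Matrix.transpose_mul, Matrix.mul_assoc]
  have hquad : X * (S * (Aᵀ * Sg)) * G * (X * (S * (Aᵀ * Sg)))ᵀ = X * S * (X * S)ᵀ := calc
    _ = X * S * (Aᵀ * (Sg * G * Sg) * A) * (X * S)ᵀ := by
      simp only [Matrix.transpose_mul, hSgt, Matrix.transpose_transpose, Matrix.mul_assoc]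
    _ = _ := by rw [hG.mul_inv_mul, hASA, Matrix.mul_one]
  rw [trace_sub_mul_mul_transpose_sub _ _ hGt, hcross, hquad, frobSq_sub, ← frobSq_eq_trace,
    frobSq_eq_of_transpose_mul_self hA, trace_mul_penroseInverse_mul_transpose hn hSg hG]
  ring

end WeightedResidual

theorem trace_weighted_residual_of_frames {n m p r s : ℕ} {Y : Mat n m} {G : Mat m m}
    (X : Mat n p) (B : Mat p m) {A : Mat m r} {V : Mat m s}
    (hV : (Y * V)ᵀ * (Y * V) = (n : ℝ) • 1) (hAV : A * Aᵀ + V * Vᵀ = G) (hBV : B * V = 0) :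
    ((Y - X * B) * G * (Y - X * B)ᵀ).trace = frobSq (Y * A - X * (B * A)) + n * s := by
  rw [trace_mul_mul_transpose_eq_frobSq_add _ hAV, Matrix.sub_mul, Matrix.sub_mul,
    Matrix.mul_assoc X B V, hBV, Matrix.mul_zero, sub_zero, frobSq_eq_of_transpose_mul_self hV,
    Matrix.mul_assoc]

section RowMeasure

variable {n m p r q : ℕ} {Y : Mat n m} {Sg G : Mat m m} (X : Mat n p) (ρ : ∀ l, Mat p l → ℕ)

theorem crl_values_eq_image_weighted_values (hn : 0 < n) (hSg : Yᵀ * Y = (n : ℝ) • Sg)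
    (hG : IsPenroseInverse Sg G) (hr : r ≤ Y.rank)
    (hρ : ∀ {a b : ℕ} (M : Mat p a) (N : Mat a b), ρ b (M * N) ≤ ρ a M) :
    {v : ℝ | ∃ (S : Mat p r) (A : Mat m r),
        (Y * A)ᵀ * (Y * A) = (n : ℝ) • (1 : Mat r r) ∧ ρ r S ≤ q ∧
        v = frobSq (Y * A - X * S) / 2}
      = (· + (n : ℝ) / 2 * (r - Y.rank)) '' {v : ℝ | ∃ B : Mat p m, B.rank ≤ r ∧ ρ m B ≤ q ∧
          v = ((Y - X * B) * G * (Y - X * B)ᵀ).trace / 2} := by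
  ext v
  constructor
  · rintro ⟨S, A, hA, hS, rfl⟩
    refine ⟨_, ⟨S * (Aᵀ * Sg), ?_, (hρ _ _).trans hS, rfl⟩, ?_⟩
    · exact (Matrix.rank_mul_le_left _ _).trans (Matrix.rank_le_width S)
    · rw [trace_weighted_residual_of_crl hn hSg hG X S hA]
      ring
  · rintro ⟨_, ⟨B, hB, hρB, rfl⟩, rfl⟩
    obtain ⟨A, V, hA, hV, hAV, hBV⟩ :=
      exists_adapted_frames (by exact_mod_cast hn) hSg hG B hB hr
    refine ⟨B * A, A, hA, (hρ _ _).trans hρB, ?_⟩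
    rw [trace_weighted_residual_of_frames X B hV hAV hBV, Nat.cast_sub hr]
    ring

theorem sInf_crl_values_eq (hn : 0 < n) (hSg : Yᵀ * Y = (n : ℝ) • Sg)
    (hG : IsPenroseInverse Sg G) (hr : r ≤ Y.rank)
    (hρ : ∀ {a b : ℕ} (M : Mat p a) (N : Mat a b), ρ b (M * N) ≤ ρ a M) (hρ0 : ρ m 0 ≤ q) :
    sInf {v : ℝ | ∃ (S : Mat p r) (A : Mat m r),
        (Y * A)ᵀ * (Y * A) = (n : ℝ) • (1 : Mat r r) ∧ ρ r S ≤ q ∧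
        v = frobSq (Y * A - X * S) / 2}
      = sInf {v : ℝ | ∃ B : Mat p m, B.rank ≤ r ∧ ρ m B ≤ q ∧
          v = ((Y - X * B) * G * (Y - X * B)ᵀ).trace / 2}
        + (n : ℝ) / 2 * (r - Y.rank) := by
  rw [crl_values_eq_image_weighted_values X ρ hn hSg hG hr hρ]
  refine ((OrderIso.addRight _).map_csInf' ?_ ?_).symm
  · exact ⟨_, 0, by simp, hρ0, rfl⟩
  · refine ⟨0, ?_⟩
    rintro _ ⟨B, -, -, rfl⟩
    obtain ⟨W, hWW, -⟩ := exists_whitening_frame (by exact_mod_cast hn) hSg hG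
    have : ((Y - X * B) * G * (Y - X * B)ᵀ).trace = frobSq ((Y - X * B) * W) := by
      rw [frobSq_eq_trace, ← hWW]
      simp only [Matrix.transpose_mul, Matrix.mul_assoc]
    rw [this]
    exact div_nonneg (frobSq_nonneg _) zero_le_two

end RowMeasure

theorem distinctRows_mul_le {k a b : ℕ} (M : Mat k a) (N : Mat a b) :
    distinctRows (M * N) ≤ distinctRows M := by
  unfold distinctRows
  rw [show (Set.range fun i => (M * N) i) = (· ᵥ* N) '' Set.range fun i => M i from
    Set.range_comp (· ᵥ* N) (fun i => M i)]
  exact Set.ncard_image_le (Set.finite_range _)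

theorem nonzeroRows_mul_le {k a b : ℕ} (M : Mat k a) (N : Mat a b) :
    nonzeroRows (M * N) ≤ nonzeroRows M := by
  refine Set.ncard_le_ncard (fun i hi hMi => hi ?_) (Set.toFinite _)
  ext j
  simp [Matrix.mul_apply, show M i = 0 from hMi]

theorem distinctRows_zero_le_one {k l : ℕ} : distinctRows (0 : Mat k l) ≤ 1 :=
  (Set.ncard_le_ncard (t := {0}) (by rintro _ ⟨i, rfl⟩; rfl)).trans (Set.ncard_singleton _).le

theorem nonzeroRows_zero {k l : ℕ} : nonzeroRows (0 : Mat k l) = 0 := by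
  simp [nonzeroRows, funext_iff]

theorem projected_crl_eq_weighted_rrr_general
    (n p m r q : ℕ) (X : Mat n p) (Y : Mat n m) (G : Mat m m)
    (hr1 : 1 ≤ r) (hr : r ≤ Y.rank) (hq1 : 1 ≤ q)
    (hG1 : ((1 / (n : ℝ)) • (Yᵀ * Y)) * G * ((1 / (n : ℝ)) • (Yᵀ * Y))
        = (1 / (n : ℝ)) • (Yᵀ * Y))
    (hG2 : G * ((1 / (n : ℝ)) • (Yᵀ * Y)) * G = G)
    (hG3 : (((1 / (n : ℝ)) • (Yᵀ * Y)) * G)ᵀ = ((1 / (n : ℝ)) • (Yᵀ * Y)) * G)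
    (hG4 : (G * ((1 / (n : ℝ)) • (Yᵀ * Y)))ᵀ = G * ((1 / (n : ℝ)) • (Yᵀ * Y))) :
    (sInf {v : ℝ | ∃ (S : Mat p r) (A : Mat m r),
        (Y * A)ᵀ * (Y * A) = (n : ℝ) • (1 : Mat r r) ∧ distinctRows S ≤ q ∧
        v = frobSq (Y * A - X * S) / 2}
      = sInf {v : ℝ | ∃ B : Mat p m, B.rank ≤ r ∧ distinctRows B ≤ q ∧
          v = Matrix.trace ((Y - X * B) * G * (Y - X * B)ᵀ) / 2}
        + ((n : ℝ) / 2) * ((r : ℝ) - Y.rank)) ∧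
    (sInf {v : ℝ | ∃ (S : Mat p r) (A : Mat m r),
        (Y * A)ᵀ * (Y * A) = (n : ℝ) • (1 : Mat r r) ∧ nonzeroRows S ≤ q ∧
        v = frobSq (Y * A - X * S) / 2}
      = sInf {v : ℝ | ∃ B : Mat p m, B.rank ≤ r ∧ nonzeroRows B ≤ q ∧
          v = Matrix.trace ((Y - X * B) * G * (Y - X * B)ᵀ) / 2}
        + ((n : ℝ) / 2) * ((r : ℝ) - Y.rank)) := by
  have hn : 0 < n := by
    have := Y.rank_le_height
    omega
  have hSg : Yᵀ * Y = (n : ℝ) • ((1 / (n : ℝ)) • (Yᵀ * Y)) := by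
    rw [smul_smul, mul_one_div_cancel (by positivity), one_smul]
  have hG : IsPenroseInverse _ G := ⟨hG1, hG2, hG3, hG4⟩
  exact ⟨sInf_crl_values_eq X (fun _ M => distinctRows M) hn hSg hG hr distinctRows_mul_le
      (distinctRows_zero_le_one.trans hq1),
    sInf_crl_values_eq X (fun _ M => nonzeroRows M) hn hSg hG hr nonzeroRows_mul_le
      (by simp [nonzeroRows_zero])⟩

/-- **Equivalence of the projected (canonical-correlation-type) form of CRL and weighted
reduced-rank regression.** With `Σ_Y = YᵀY/n` and `G` its Moore–Penrose inverse,
`inf {½‖YA - XS‖_F² : (YA)ᵀYA = nI, ‖S‖_{2,C} ≤ q}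
 = inf {½Tr((Y-XB)G(Y-XB)ᵀ) : rank B ≤ r, ‖B‖_{2,C} ≤ q} + (n/2)(r - rank Y)`,
and likewise with the `(2,C)` constraints replaced by row-sparsity constraints. -/
theorem projected_crl_eq_weighted_rrr
    (n p m r q : ℕ) (X : Mat n p) (Y : Mat n m) (G : Mat m m)
    (hr1 : 1 ≤ r) (hr : r ≤ Y.rank) (hq1 : 1 ≤ q) (hq : q ≤ p)
    (hG1 : ((1 / (n : ℝ)) • (Yᵀ * Y)) * G * ((1 / (n : ℝ)) • (Yᵀ * Y))
        = (1 / (n : ℝ)) • (Yᵀ * Y))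
    (hG2 : G * ((1 / (n : ℝ)) • (Yᵀ * Y)) * G = G)
    (hG3 : (((1 / (n : ℝ)) • (Yᵀ * Y)) * G)ᵀ = ((1 / (n : ℝ)) • (Yᵀ * Y)) * G)
    (hG4 : (G * ((1 / (n : ℝ)) • (Yᵀ * Y)))ᵀ = G * ((1 / (n : ℝ)) • (Yᵀ * Y))) :
    (sInf {v : ℝ | ∃ (S : Mat p r) (A : Mat m r),
        (Y * A)ᵀ * (Y * A) = (n : ℝ) • (1 : Mat r r) ∧ distinctRows S ≤ q ∧
        v = frobSq (Y * A - X * S) / 2}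
      = sInf {v : ℝ | ∃ B : Mat p m, B.rank ≤ r ∧ distinctRows B ≤ q ∧
          v = Matrix.trace ((Y - X * B) * G * (Y - X * B)ᵀ) / 2}
        + ((n : ℝ) / 2) * ((r : ℝ) - Y.rank)) ∧
    (sInf {v : ℝ | ∃ (S : Mat p r) (A : Mat m r),
        (Y * A)ᵀ * (Y * A) = (n : ℝ) • (1 : Mat r r) ∧ nonzeroRows S ≤ q ∧
        v = frobSq (Y * A - X * S) / 2}
      = sInf {v : ℝ | ∃ B : Mat p m, B.rank ≤ r ∧ nonzeroRows B ≤ q ∧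
          v = Matrix.trace ((Y - X * B) * G * (Y - X * B)ᵀ) / 2}
        + ((n : ℝ) / 2) * ((r : ℝ) - Y.rank)) :=
  projected_crl_eq_weighted_rrr_general n p m r q X Y G hr1 hr hq1 hG1 hG2 hG3 hG4
end
end
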